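/- (Agreement of the left and right S-functional calculus for intrinsic functions, ball case) Let Y be a complex Banach space, A a bounded ℝ-linear operator on Y, and r > ‖A‖. Let a : ℕ → ℝ be real coefficients with ∑ₙ |aₙ|·rⁿ < ∞ and set f(s) = ∑_{n=0}^∞ aₙ·sⁿ for s ∈ ℂ with |s| ≤ r. Then, parametrizing the circle of radius r by s(θ) = r·e^{iθ}, the three operators (1/2π) ∫₀^{2π} S_L^{-1}(s(θ),A) ∘ ((s(θ)·f(s(θ)))·id) dθ, the norm-convergent sum ∑_{n=0}^∞ aₙ·Aⁿ, and (1/2π) ∫₀^{2π} ((f(s(θ))·s(θ))·(S_R^{-1}(s(θ),A))) dθ — where in the last expression the scalar f(s(θ))·s(θ) multiplies the operator on the left, i.e. (c·B)y = c·(By) — are all equal. -/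

import Mathlib

open ContinuousLinearMap Filter Topology Complex
set_option linter.unusedSectionVars false
open intervalIntegral MeasureTheory
open scoped Real

namespace Stmt19
variable {Y : Type*} [NormedAddCommGroup Y] [NormedSpace ℂ Y] [CompleteSpace Y]

noncomputable def sm (c : ℂ) : Y →L[ℝ] Y := c • (1 : Y →L[ℝ] Y)

lemma sm_apply (c : ℂ) (y : Y) : (sm c : Y →L[ℝ] Y) y = c • y := rfl

lemma sm_mul_sm (c d : ℂ) : (sm c : Y →L[ℝ] Y) * sm d = sm (c * d) := by
  ext y; simp [sm_apply, mul_smul, ContinuousLinearMap.mul_apply]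

lemma sm_mul (c : ℂ) (B : Y →L[ℝ] Y) : (sm c) * B = c • B := by ext y; rfl

lemma sm_add (c d : ℂ) : (sm (c + d) : Y →L[ℝ] Y) = sm c + sm d := by
  simp [sm, add_smul]

lemma sm_one : (sm 1 : Y →L[ℝ] Y) = 1 := by simp [sm]

lemma norm_sm_le (c : ℂ) : ‖(sm c : Y →L[ℝ] Y)‖ ≤ ‖c‖ := by
  calc ‖(sm c : Y →L[ℝ] Y)‖ = ‖c‖ * ‖(1 : Y →L[ℝ] Y)‖ := norm_smul c (1 : Y →L[ℝ] Y)
  _ ≤ ‖c‖ * 1 := by gcongr; exact ContinuousLinearMap.norm_id_le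
  _ = ‖c‖ := by simp

lemma rsmul_mul_sm (t : ℝ) (B : Y →L[ℝ] Y) (c : ℂ) :
    t • (B * sm c) = B * sm ((t : ℂ) * c) := by
  ext y
  simp only [ContinuousLinearMap.smul_apply, ContinuousLinearMap.mul_apply, sm_apply]
  have h : ((t:ℂ) * c) • y = t • (c • y) := by rw [mul_smul]; norm_num
  rw [h, B.map_smul]

lemma rsmul_mul (t : ℝ) (B C : Y →L[ℝ] Y) : (t • B) * C = t • (B * C) := by
  ext y; simp [ContinuousLinearMap.mul_apply]

lemma mul_rsmul (t : ℝ) (B C : Y →L[ℝ] Y) : B * (t • C) = t • (B * C) := by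
  ext y; simp [ContinuousLinearMap.mul_apply, B.map_smul]

lemma rsmul_smul (t : ℝ) (c : ℂ) (B : Y →L[ℝ] Y) : t • (c • B) = ((t : ℂ) * c) • B := by
  rw [← smul_assoc, Complex.real_smul]

lemma rsmul_sm_mul (t : ℝ) (c : ℂ) (B : Y →L[ℝ] Y) :
    t • ((sm c : Y →L[ℝ] Y) * B) = sm ((t:ℂ) * c) * B := by
  rw [sm_mul, sm_mul, rsmul_smul]

lemma norm_pow_le'' (A : Y →L[ℝ] Y) (n : ℕ) : ‖A ^ n‖ ≤ ‖A‖ ^ n := by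
  cases n with
  | zero => rw [pow_zero, pow_zero]; exact ContinuousLinearMap.norm_id_le
  | succ m => exact norm_pow_le' A (Nat.succ_pos m)

variable (A : Y →L[ℝ] Y)

noncomputable def Qop (z : ℂ) : Y →L[ℝ] Y :=
  A ^ 2 - (2 * z.re) • A + (‖z‖ ^ 2) • (1 : Y →L[ℝ] Y)

lemma Qop_conj (z : ℂ) : Qop A (starRingEnd ℂ z) = Qop A z := by simp [Qop]

noncomputable def lterm (z : ℂ) (n : ℕ) : Y →L[ℝ] Y := A ^ n * sm (z⁻¹ ^ (n + 1))
noncomputable def rterm (z : ℂ) (n : ℕ) : Y →L[ℝ] Y := sm (z⁻¹ ^ (n + 1)) * A ^ n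

lemma norm_lterm_le (z : ℂ) (n : ℕ) :
    ‖lterm A z n‖ ≤ (‖z‖)⁻¹ * (‖A‖ * (‖z‖)⁻¹) ^ n := by
  calc ‖lterm A z n‖ ≤ ‖A ^ n‖ * ‖(sm (z⁻¹ ^ (n+1)) : Y →L[ℝ] Y)‖ := norm_mul_le _ _
    _ ≤ ‖A‖ ^ n * ((‖z‖)⁻¹ ^ (n + 1)) := by
        apply mul_le_mul (norm_pow_le'' A n) ?_ (norm_nonneg _) (by positivity)
        simpa [map_pow, map_inv₀] using norm_sm_le (z⁻¹ ^ (n+1) : ℂ)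
    _ = (‖z‖)⁻¹ * (‖A‖ * (‖z‖)⁻¹) ^ n := by ring

lemma norm_rterm_le (z : ℂ) (n : ℕ) :
    ‖rterm A z n‖ ≤ (‖z‖)⁻¹ * (‖A‖ * (‖z‖)⁻¹) ^ n := by
  calc ‖rterm A z n‖ ≤ ‖(sm (z⁻¹ ^ (n+1)) : Y →L[ℝ] Y)‖ * ‖A ^ n‖ := norm_mul_le _ _
    _ ≤ ((‖z‖)⁻¹ ^ (n + 1)) * ‖A‖ ^ n := by
        apply mul_le_mul ?_ (norm_pow_le'' A n) (norm_nonneg _) (by positivity)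
        simpa [map_pow, map_inv₀] using norm_sm_le (z⁻¹ ^ (n+1) : ℂ)
    _ = (‖z‖)⁻¹ * (‖A‖ * (‖z‖)⁻¹) ^ n := by ring

lemma summable_geom_aux {z : ℂ} (hz : ‖A‖ < ‖z‖) :
    Summable (fun n : ℕ => (‖z‖)⁻¹ * (‖A‖ * (‖z‖)⁻¹) ^ n) := by
  have h0 : (0:ℝ) < ‖z‖ := lt_of_le_of_lt (norm_nonneg A) hz
  have h1 : ‖A‖ * (‖z‖)⁻¹ < 1 := by
    rw [← div_eq_mul_inv, div_lt_one h0]; exact hz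
  exact (summable_geometric_of_lt_one (by positivity) h1).mul_left _

lemma summable_lterm {z : ℂ} (hz : ‖A‖ < ‖z‖) : Summable (lterm A z) :=
  Summable.of_norm <| (summable_geom_aux A hz).of_nonneg_of_le
    (fun _ => norm_nonneg _) (fun n => norm_lterm_le A z n)

lemma summable_rterm {z : ℂ} (hz : ‖A‖ < ‖z‖) : Summable (rterm A z) :=
  Summable.of_norm <| (summable_geom_aux A hz).of_nonneg_of_le
    (fun _ => norm_nonneg _) (fun n => norm_rterm_le A z n)

-- scalar identities
lemma scalar1 {z : ℂ} (hz0 : z ≠ 0) (n : ℕ) :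
    ((2 * z.re : ℝ) : ℂ) * z⁻¹ ^ (n + 1) = z⁻¹ ^ n + (starRingEnd ℂ z) * z⁻¹ ^ (n + 1) := by
  have h2 : ((2 * z.re : ℝ) : ℂ) = z + starRingEnd ℂ z := by
    rw [Complex.add_conj]
  have hzw : z * z⁻¹ ^ (n + 1) = z⁻¹ ^ n := by
    rw [pow_succ, mul_comm z (z⁻¹ ^ n * z⁻¹), mul_assoc, inv_mul_cancel₀ hz0, mul_one]
  rw [h2, add_mul, hzw]

lemma scalar2 {z : ℂ} (hz0 : z ≠ 0) (n : ℕ) :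
    ((‖z‖ ^ 2 : ℝ) : ℂ) * z⁻¹ ^ (n + 1) = (starRingEnd ℂ z) * z⁻¹ ^ n := by
  have h1 : ((‖z‖ ^ 2 : ℝ) : ℂ) = z * starRingEnd ℂ z := by
    rw [Complex.mul_conj]; norm_cast; exact Complex.sq_norm z
  have hzw : z * z⁻¹ ^ (n + 1) = z⁻¹ ^ n := by
    rw [pow_succ, mul_comm z (z⁻¹ ^ n * z⁻¹), mul_assoc, inv_mul_cancel₀ hz0, mul_one]
  rw [h1, mul_comm z (starRingEnd ℂ z), mul_assoc, hzw]

noncomputable def lE (z : ℂ) (n : ℕ) : Y →L[ℝ] Y :=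
  A ^ n * sm ((starRingEnd ℂ z) * z⁻¹ ^ n) - A ^ (n + 1) * sm (z⁻¹ ^ n)

noncomputable def rE (z : ℂ) (n : ℕ) : Y →L[ℝ] Y :=
  sm ((starRingEnd ℂ z) * z⁻¹ ^ n) * A ^ n - sm (z⁻¹ ^ n) * A ^ (n + 1)

lemma Q_mul_lterm {z : ℂ} (hz0 : z ≠ 0) (n : ℕ) :
    Qop A z * lterm A z n = lE A z n - lE A z (n + 1) := by
  rw [Qop, lterm, add_mul, sub_mul, rsmul_mul, rsmul_mul, one_mul]
  rw [← mul_assoc (A ^ 2), ← pow_add, ← mul_assoc A, ← pow_succ']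
  rw [rsmul_mul_sm, rsmul_mul_sm, scalar1 hz0, scalar2 hz0]
  rw [lE, lE]
  rw [sm_add, mul_add]
  have e2 : 2 + n = n + 2 := by omega
  rw [e2]
  abel

lemma rterm_mul_Q {z : ℂ} (hz0 : z ≠ 0) (n : ℕ) :
    rterm A z n * Qop A z = rE A z n - rE A z (n + 1) := by
  rw [Qop, rterm, mul_add, mul_sub, mul_rsmul, mul_rsmul, mul_one]
  rw [mul_assoc _ _ (A ^ 2), ← pow_add, mul_assoc _ _ A, ← pow_succ]
  rw [rsmul_sm_mul, rsmul_sm_mul, scalar1 hz0, scalar2 hz0]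
  rw [rE, rE]
  rw [sm_add, add_mul]
  abel

lemma lE_tendsto {z : ℂ} (hz : ‖A‖ < ‖z‖) :
    Tendsto (lE A z) atTop (𝓝 0) := by
  have h0 : (0:ℝ) < ‖z‖ := lt_of_le_of_lt (norm_nonneg A) hz
  have h1 : ‖A‖ * (‖z‖)⁻¹ < 1 := by
    rw [← div_eq_mul_inv, div_lt_one h0]; exact hz
  have hb : ∀ n, ‖lE A z n‖ ≤ (‖z‖ + ‖A‖) * (‖A‖ * (‖z‖)⁻¹) ^ n := by
    intro n
    
    have b1 : ‖A ^ n * (sm ((starRingEnd ℂ z) * z⁻¹ ^ n) : Y →L[ℝ] Y)‖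
        ≤ ‖z‖ * (‖A‖ * (‖z‖)⁻¹) ^ n := by
      calc ‖A ^ n * (sm ((starRingEnd ℂ z) * z⁻¹ ^ n) : Y →L[ℝ] Y)‖
          ≤ ‖A ^ n‖ * ‖(sm ((starRingEnd ℂ z) * z⁻¹ ^ n) : Y →L[ℝ] Y)‖ := norm_mul_le _ _
        _ ≤ ‖A‖ ^ n * (‖z‖ * (‖z‖)⁻¹ ^ n) := by
            apply mul_le_mul (norm_pow_le'' A n) ?_ (norm_nonneg _) (by positivity)
            simpa [map_mul, map_pow, map_inv₀] using
              norm_sm_le ((starRingEnd ℂ z) * z⁻¹ ^ n : ℂ)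
        _ = ‖z‖ * (‖A‖ * (‖z‖)⁻¹) ^ n := by ring
    have b2 : ‖A ^ (n+1) * (sm (z⁻¹ ^ n) : Y →L[ℝ] Y)‖
        ≤ ‖A‖ * (‖A‖ * (‖z‖)⁻¹) ^ n := by
      calc ‖A ^ (n+1) * (sm (z⁻¹ ^ n) : Y →L[ℝ] Y)‖
          ≤ ‖A ^ (n+1)‖ * ‖(sm (z⁻¹ ^ n) : Y →L[ℝ] Y)‖ := norm_mul_le _ _
        _ ≤ ‖A‖ ^ (n+1) * (‖z‖)⁻¹ ^ n := by
            apply mul_le_mul (norm_pow_le'' A (n+1)) ?_ (norm_nonneg _) (by positivity)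
            simpa [map_pow, map_inv₀] using norm_sm_le (z⁻¹ ^ n : ℂ)
        _ = ‖A‖ * (‖A‖ * (‖z‖)⁻¹) ^ n := by ring
    calc ‖lE A z n‖ ≤ _ + _ := norm_sub_le _ _
      _ ≤ ‖z‖ * (‖A‖ * (‖z‖)⁻¹) ^ n
          + ‖A‖ * (‖A‖ * (‖z‖)⁻¹) ^ n := add_le_add b1 b2
      _ = (‖z‖ + ‖A‖) * (‖A‖ * (‖z‖)⁻¹) ^ n := by ring
  refine squeeze_zero_norm hb ?_
  have := tendsto_pow_atTop_nhds_zero_of_lt_one (by positivity) h1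
  simpa using this.const_mul (‖z‖ + ‖A‖)

lemma rE_tendsto {z : ℂ} (hz : ‖A‖ < ‖z‖) :
    Tendsto (rE A z) atTop (𝓝 0) := by
  have h0 : (0:ℝ) < ‖z‖ := lt_of_le_of_lt (norm_nonneg A) hz
  have h1 : ‖A‖ * (‖z‖)⁻¹ < 1 := by
    rw [← div_eq_mul_inv, div_lt_one h0]; exact hz
  have hb : ∀ n, ‖rE A z n‖ ≤ (‖z‖ + ‖A‖) * (‖A‖ * (‖z‖)⁻¹) ^ n := by
    intro n
    
    have b1 : ‖(sm ((starRingEnd ℂ z) * z⁻¹ ^ n) : Y →L[ℝ] Y) * A ^ n‖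
        ≤ ‖z‖ * (‖A‖ * (‖z‖)⁻¹) ^ n := by
      calc ‖(sm ((starRingEnd ℂ z) * z⁻¹ ^ n) : Y →L[ℝ] Y) * A ^ n‖
          ≤ ‖(sm ((starRingEnd ℂ z) * z⁻¹ ^ n) : Y →L[ℝ] Y)‖ * ‖A ^ n‖ := norm_mul_le _ _
        _ ≤ (‖z‖ * (‖z‖)⁻¹ ^ n) * ‖A‖ ^ n := by
            apply mul_le_mul ?_ (norm_pow_le'' A n) (norm_nonneg _) (by positivity)
            simpa [map_mul, map_pow, map_inv₀] using
              norm_sm_le ((starRingEnd ℂ z) * z⁻¹ ^ n : ℂ)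
        _ = ‖z‖ * (‖A‖ * (‖z‖)⁻¹) ^ n := by ring
    have b2 : ‖(sm (z⁻¹ ^ n) : Y →L[ℝ] Y) * A ^ (n+1)‖
        ≤ ‖A‖ * (‖A‖ * (‖z‖)⁻¹) ^ n := by
      calc ‖(sm (z⁻¹ ^ n) : Y →L[ℝ] Y) * A ^ (n+1)‖
          ≤ ‖(sm (z⁻¹ ^ n) : Y →L[ℝ] Y)‖ * ‖A ^ (n+1)‖ := norm_mul_le _ _
        _ ≤ (‖z‖)⁻¹ ^ n * ‖A‖ ^ (n+1) := by
            apply mul_le_mul ?_ (norm_pow_le'' A (n+1)) (norm_nonneg _) (by positivity)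
            simpa [map_pow, map_inv₀] using norm_sm_le (z⁻¹ ^ n : ℂ)
        _ = ‖A‖ * (‖A‖ * (‖z‖)⁻¹) ^ n := by ring
    calc ‖rE A z n‖ ≤ _ + _ := norm_sub_le _ _
      _ ≤ _ := add_le_add b1 b2
      _ = (‖z‖ + ‖A‖) * (‖A‖ * (‖z‖)⁻¹) ^ n := by ring
  refine squeeze_zero_norm hb ?_
  have := tendsto_pow_atTop_nhds_zero_of_lt_one (by positivity) h1
  simpa using this.const_mul (‖z‖ + ‖A‖)

lemma sum_eq_of_telescope {R : Type*} [NormedAddCommGroup R] {g : ℕ → R} {S : R} {E : ℕ → R}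
    (hg : HasSum g S) (hrel : ∀ n, g n = E n - E (n+1)) (hE : Tendsto E atTop (𝓝 0)) :
    S = E 0 := by
  have h1 := hg.tendsto_sum_nat
  have h2 : ∀ N, ∑ n ∈ Finset.range N, g n = E 0 - E N := by
    intro N; simp_rw [hrel]; exact Finset.sum_range_sub' E N
  rw [funext h2] at h1
  have h3 : Tendsto (fun N => E 0 - E N) atTop (𝓝 (E 0 - 0)) := tendsto_const_nhds.sub hE
  simpa using tendsto_nhds_unique h1 h3

noncomputable def Tl (z : ℂ) : Y →L[ℝ] Y := ∑' n, lterm A z n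
noncomputable def Tr (z : ℂ) : Y →L[ℝ] Y := ∑' n, rterm A z n

lemma Q_mul_Tl {z : ℂ} (hz : ‖A‖ < ‖z‖) :
    Qop A z * Tl A z = sm (starRingEnd ℂ z) - A := by
  have hz0 : z ≠ 0 := by
    intro h; rw [h] at hz; simp at hz; exact absurd hz (not_lt.mpr (norm_nonneg A))
  have hsum := (summable_lterm A hz).hasSum
  have hm : HasSum (fun n => Qop A z * lterm A z n) (Qop A z * Tl A z) := by
    have := hsum.mapL (ContinuousLinearMap.compL ℝ Y Y Y (Qop A z))
    exact this
  have := sum_eq_of_telescope hm (Q_mul_lterm A hz0) (lE_tendsto A hz)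
  rw [this, lE]
  simp [sm_mul_sm, pow_zero, mul_one, sm_one]

lemma Tr_mul_Q {z : ℂ} (hz : ‖A‖ < ‖z‖) :
    Tr A z * Qop A z = sm (starRingEnd ℂ z) - A := by
  have hz0 : z ≠ 0 := by
    intro h; rw [h] at hz; simp at hz; exact absurd hz (not_lt.mpr (norm_nonneg A))
  have hsum := (summable_rterm A hz).hasSum
  have hm : HasSum (fun n => rterm A z n * Qop A z) (Tr A z * Qop A z) := by
    have := hsum.mapL ((ContinuousLinearMap.compL ℝ Y Y Y).flip (Qop A z))
    exact this
  have := sum_eq_of_telescope hm (rterm_mul_Q A hz0) (rE_tendsto A hz)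
  rw [this, rE]
  simp [sm_mul_sm, pow_zero, mul_one, sm_one]

end Stmt19

namespace Stmt19
variable {Y : Type*} [NormedAddCommGroup Y] [NormedSpace ℂ Y] [CompleteSpace Y] (A : Y →L[ℝ] Y)

lemma sm_sub (c d : ℂ) : (sm (c - d) : Y →L[ℝ] Y) = sm c - sm d := by
  simp [sm, sub_smul]

noncomputable def Binv (z : ℂ) : Y →L[ℝ] Y :=
  (Tl A z - Tl A (starRingEnd ℂ z)) * sm ((starRingEnd ℂ z - z)⁻¹)

lemma Q_mul_Binv {z : ℂ} (hz : ‖A‖ < ‖z‖) (him : z.im ≠ 0) :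
    Qop A z * Binv A z = 1 := by
  have hzc : ‖A‖ < ‖(starRingEnd ℂ z)‖ := by rwa [Complex.norm_conj]
  have hd : starRingEnd ℂ z - z ≠ 0 := by
    intro h
    have : (starRingEnd ℂ z - z).im = 0 := by rw [h]; simp
    simp [Complex.sub_im, Complex.conj_im] at this
    exact him (by linarith)
  have h1 : Qop A z * Tl A z = sm (starRingEnd ℂ z) - A := Q_mul_Tl A hz
  have h2 : Qop A z * Tl A (starRingEnd ℂ z) = sm z - A := by
    have := Q_mul_Tl A hzc
    rwa [Qop_conj, Complex.conj_conj] at this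
  rw [Binv, ← mul_assoc, mul_sub, h1, h2]
  have : (sm (starRingEnd ℂ z) - A) - (sm z - A) = (sm (starRingEnd ℂ z - z) : Y →L[ℝ] Y) := by
    rw [sm_sub]; abel
  rw [this, sm_mul_sm, mul_inv_cancel₀ hd, sm_one]

noncomputable def Binv' (z : ℂ) : Y →L[ℝ] Y :=
  sm ((starRingEnd ℂ z - z)⁻¹) * (Tr A z - Tr A (starRingEnd ℂ z))

lemma Binv'_mul_Q {z : ℂ} (hz : ‖A‖ < ‖z‖) (him : z.im ≠ 0) :
    Binv' A z * Qop A z = 1 := by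
  have hzc : ‖A‖ < ‖(starRingEnd ℂ z)‖ := by rwa [Complex.norm_conj]
  have hd : starRingEnd ℂ z - z ≠ 0 := by
    intro h
    have : (starRingEnd ℂ z - z).im = 0 := by rw [h]; simp
    simp [Complex.sub_im, Complex.conj_im] at this
    exact him (by linarith)
  have h1 : Tr A z * Qop A z = sm (starRingEnd ℂ z) - A := Tr_mul_Q A hz
  have h2 : Tr A (starRingEnd ℂ z) * Qop A z = sm z - A := by
    have := Tr_mul_Q A hzc
    rwa [Qop_conj, Complex.conj_conj] at this
  rw [Binv', mul_assoc, sub_mul, h1, h2]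
  have : (sm (starRingEnd ℂ z) - A) - (sm z - A) = (sm (starRingEnd ℂ z - z) : Y →L[ℝ] Y) := by
    rw [sm_sub]; abel
  rw [this, sm_mul_sm, inv_mul_cancel₀ hd, sm_one]

lemma Binv'_eq_Binv {z : ℂ} (hz : ‖A‖ < ‖z‖) (him : z.im ≠ 0) :
    Binv' A z = Binv A z := by
  calc Binv' A z = Binv' A z * (Qop A z * Binv A z) := by rw [Q_mul_Binv A hz him, mul_one]
  _ = (Binv' A z * Qop A z) * Binv A z := by rw [mul_assoc]
  _ = Binv A z := by rw [Binv'_mul_Q A hz him, one_mul]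

lemma ringInverse_Q {z : ℂ} (hz : ‖A‖ < ‖z‖) (him : z.im ≠ 0) :
    Ring.inverse (Qop A z) = Binv A z := by
  have hBQ : Binv A z * Qop A z = 1 := by
    rw [← Binv'_eq_Binv A hz him]; exact Binv'_mul_Q A hz him
  let u : (Y →L[ℝ] Y)ˣ := ⟨Qop A z, Binv A z, Q_mul_Binv A hz him, hBQ⟩
  have : Qop A z = (u : Y →L[ℝ] Y) := rfl
  rw [this, Ring.inverse_unit]
  rfl

lemma SL_eq {z : ℂ} (hz : ‖A‖ < ‖z‖) (him : z.im ≠ 0) :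
    -(Ring.inverse (Qop A z) ∘L (A - starRingEnd ℂ z • (1 : Y →L[ℝ] Y))) = Tl A z := by
  have hBQ : Binv A z * Qop A z = 1 := by
    rw [← Binv'_eq_Binv A hz him]; exact Binv'_mul_Q A hz him
  have hcomp : (Ring.inverse (Qop A z) ∘L (A - starRingEnd ℂ z • (1 : Y →L[ℝ] Y)))
      = Binv A z * (A - sm (starRingEnd ℂ z)) := by
    rw [ringInverse_Q A hz him]; rfl
  rw [hcomp, ← mul_neg, neg_sub]
  rw [← Q_mul_Tl A hz, ← mul_assoc, hBQ, one_mul]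

lemma SR_eq {z : ℂ} (hz : ‖A‖ < ‖z‖) (him : z.im ≠ 0) :
    -((A - starRingEnd ℂ z • (1 : Y →L[ℝ] Y)) ∘L Ring.inverse (Qop A z)) = Tr A z := by
  have hQB : Qop A z * Binv A z = 1 := Q_mul_Binv A hz him
  have hcomp : ((A - starRingEnd ℂ z • (1 : Y →L[ℝ] Y)) ∘L Ring.inverse (Qop A z))
      = (A - sm (starRingEnd ℂ z)) * Binv A z := by
    rw [ringInverse_Q A hz him]; rfl
  rw [hcomp, ← neg_mul, neg_sub]
  rw [← Tr_mul_Q A hz, mul_assoc, hQB, mul_one]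

end Stmt19

namespace Stmt19

noncomputable def Fc (a : ℕ → ℝ) (s : ℝ → ℂ) (θ : ℝ) : ℂ := ∑' m, (a m : ℂ) * (s θ) ^ m

section scalar
variable {r : ℝ} (hr0 : 0 < r) {a : ℕ → ℝ} (hconv : Summable (fun n : ℕ => |a n| * r ^ n))
  {s : ℝ → ℂ} (hs : ∀ θ, s θ = r * Complex.exp (θ * Complex.I))

include hs hr0

lemma habs : ∀ θ, ‖(s θ)‖ = r := by
  intro θ
  rw [hs]
  simp [Complex.norm_exp_ofReal_mul_I, abs_of_pos hr0]

lemma hs_ne : ∀ θ, s θ ≠ 0 := by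
  intro θ h
  have := habs hr0 hs θ
  rw [h] at this; simp at this; exact absurd this.symm (ne_of_gt hr0)

lemma hs_cont : Continuous s := by
  have : s = fun (θ:ℝ) => (r : ℂ) * Complex.exp ((θ:ℂ) * Complex.I) := funext hs
  rw [this]
  continuity

include hconv

lemma Fc_cont : Continuous (Fc a s) := by
  apply continuous_tsum (u := fun m => |a m| * r ^ m) ?_ hconv
  · intro m θ
    rw [norm_mul, norm_pow, habs hr0 hs]
    simp
  · intro m
    exact (continuous_const.mul ((hs_cont hr0 hs).pow m))

lemma Fc_bound : ∀ θ, ‖(Fc a s θ)‖ ≤ ∑' m, |a m| * r ^ m := by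
  intro θ
  have hnorm : ∀ m, ‖(a m : ℂ) * s θ ^ m‖ = |a m| * r ^ m := by
    intro m
    rw [norm_mul, norm_pow, habs hr0 hs]
    simp
  have hsum' : Summable (fun m => ‖(a m : ℂ) * s θ ^ m‖) := by
    rw [funext hnorm]; exact hconv
  rw [Fc]
  calc ‖∑' m, (a m : ℂ) * s θ ^ m‖ ≤ ∑' m, ‖(a m : ℂ) * s θ ^ m‖ := norm_tsum_le_tsum_norm hsum'
  _ = ∑' m, |a m| * r ^ m := tsum_congr hnorm

-- single Fourier integral
lemma fourier_int (m n : ℕ) (hmn : m ≠ n) :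
    ∫ θ in (0:ℝ)..(2*π), ((a m : ℂ) * (s θ) ^ m * ((s θ)⁻¹) ^ n) = 0 := by
  have hc : ((m : ℂ) - (n : ℂ)) * Complex.I ≠ 0 := by
    apply mul_ne_zero _ Complex.I_ne_zero
    intro h
    have : (m : ℂ) = (n : ℂ) := by linear_combination h
    exact hmn (by exact_mod_cast this)
  have hexp : ∀ θ : ℝ, Complex.exp ((θ:ℂ) * Complex.I) ^ m *
      ((Complex.exp ((θ:ℂ) * Complex.I))⁻¹) ^ n
      = Complex.exp ((((m : ℂ) - (n : ℂ)) * Complex.I) * (θ : ℂ)) := by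
    intro θ
    rw [← Complex.exp_neg, ← Complex.exp_nat_mul, ← Complex.exp_nat_mul, ← Complex.exp_add]
    congr 1
    ring
  have hptw : ∀ θ : ℝ, (a m : ℂ) * (s θ) ^ m * ((s θ)⁻¹) ^ n
      = ((a m : ℂ) * (r : ℂ) ^ m * ((r : ℂ)⁻¹) ^ n) *
        Complex.exp ((((m : ℂ) - (n : ℂ)) * Complex.I) * (θ : ℂ)) := by
    intro θ
    rw [hs θ, mul_pow, mul_inv, mul_pow, ← hexp θ]
    ring
  rw [intervalIntegral.integral_congr (g := fun (θ:ℝ) => ((a m : ℂ) * (r : ℂ) ^ m * ((r : ℂ)⁻¹) ^ n) *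
        Complex.exp ((((m : ℂ) - (n : ℂ)) * Complex.I) * (θ : ℂ))) (fun θ _ => hptw θ)]
  rw [intervalIntegral.integral_const_mul]
  rw [integral_exp_mul_complex hc]
  have h1 : Complex.exp ((((m : ℂ) - (n : ℂ)) * Complex.I) * ((2*π : ℝ) : ℂ)) = 1 := by
    have : (((m : ℂ) - (n : ℂ)) * Complex.I) * ((2*π : ℝ) : ℂ)
        = ((m - n : ℤ) : ℂ) * (2 * (π : ℂ) * Complex.I) := by push_cast; ring
    rw [this, Complex.exp_int_mul_two_pi_mul_I]
  have h2 : Complex.exp ((((m : ℂ) - (n : ℂ)) * Complex.I) * ((0:ℝ) : ℂ)) = 1 := by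
    norm_num
  rw [h1, h2]
  simp


lemma key_scalar (n : ℕ) :
    ∫ θ in (0:ℝ)..(2*π), ((s θ)⁻¹ ^ n * Fc a s θ) = ((2*π*(a n) : ℝ) : ℂ) := by
  have h2pi : (0:ℝ) ≤ 2*π := by positivity
  set g : ℕ → ℝ → ℂ := fun m θ => (a m : ℂ) * (s θ) ^ m * ((s θ)⁻¹) ^ n with hg
  have hcont : ∀ m, Continuous (g m) := by
    intro m
    exact (continuous_const.mul ((hs_cont hr0 hs).pow m)).mul
      (((hs_cont hr0 hs).inv₀ (hs_ne hr0 hs)).pow n)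
  have hnorm : ∀ m θ, ‖g m θ‖ = |a m| * r ^ m * (r⁻¹) ^ n := by
    intro m θ
    rw [hg]
    simp only [norm_mul, norm_pow, norm_inv, habs hr0 hs]
    simp
  have hptsum : ∀ θ, ((s θ)⁻¹ ^ n * Fc a s θ) = ∑' m, g m θ := by
    intro θ
    rw [Fc, ← tsum_mul_left]
    exact tsum_congr (fun m => by rw [hg]; ring)
  have hIoc : ∀ m, IntegrableOn (g m) (Set.Ioc (0:ℝ) (2*π)) volume :=
    fun m => (hcont m).integrableOn_Ioc
  have hintnorm : ∀ m, (∫ θ in Set.Ioc (0:ℝ) (2*π), ‖g m θ‖) = (2*π) * (|a m| * r ^ m * (r⁻¹) ^ n) := by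
    intro m
    rw [funext (fun θ => hnorm m θ)]
    rw [MeasureTheory.setIntegral_const]
    rw [Real.volume_real_Ioc_of_le h2pi]
    rw [smul_eq_mul]
    rw [sub_zero]
  have hsummble : Summable (fun m => ∫ θ in Set.Ioc (0:ℝ) (2*π), ‖g m θ‖) := by
    rw [funext hintnorm]
    apply Summable.congr ((hconv.mul_left ((2*π) * (r⁻¹)^n)))
    intro m; ring
  have hinterchange := MeasureTheory.integral_tsum_of_summable_integral_norm hIoc hsummble
  have e1 : ∫ θ in (0:ℝ)..(2*π), ((s θ)⁻¹ ^ n * Fc a s θ)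
      = ∫ θ in Set.Ioc (0:ℝ) (2*π), (∑' m, g m θ) := by
    rw [intervalIntegral.integral_of_le h2pi]
    congr 1
    exact funext hptsum
  have e2 : ∀ m, (∫ θ in Set.Ioc (0:ℝ) (2*π), g m θ) = ∫ θ in (0:ℝ)..(2*π), g m θ :=
    fun m => (intervalIntegral.integral_of_le h2pi).symm
  have e3 : ∀ m, m ≠ n → (∫ θ in Set.Ioc (0:ℝ) (2*π), g m θ) = 0 := by
    intro m hmn
    rw [e2 m]
    exact fourier_int hr0 hconv hs m n hmn
  have e4 : (∫ θ in Set.Ioc (0:ℝ) (2*π), g n θ) = ((2*π*(a n) : ℝ) : ℂ) := by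
    rw [e2 n]
    have hc : ∀ θ : ℝ, g n θ = ((a n : ℝ) : ℂ) := by
      intro θ
      rw [hg]
      simp only []
      rw [inv_pow, mul_assoc, mul_inv_cancel₀ (pow_ne_zero n (hs_ne hr0 hs θ)), mul_one]
    rw [intervalIntegral.integral_congr (g := fun _ => ((a n : ℝ) : ℂ)) (fun θ _ => hc θ)]
    rw [intervalIntegral.integral_const]
    rw [sub_zero, Complex.real_smul]
    push_cast; ring
  rw [e1, ← hinterchange, tsum_eq_single n (fun m hmn => e3 m hmn), e4]

end scalar
end Stmt19

namespace Stmt19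
variable {Y : Type*} [NormedAddCommGroup Y] [NormedSpace ℂ Y] [CompleteSpace Y]

lemma sm_real (t : ℝ) : (sm ((t : ℝ) : ℂ) : Y →L[ℝ] Y) = t • (1 : Y →L[ℝ] Y) := by
  ext y
  show ((t : ℝ) : ℂ) • y = t • ((1 : Y →L[ℝ] Y) y)
  simp

noncomputable def Lop (A : Y →L[ℝ] Y) (n : ℕ) : ℂ →L[ℝ] (Y →L[ℝ] Y) :=
  (ContinuousLinearMap.compL ℝ Y Y Y (A ^ n)).comp
    ((ContinuousLinearMap.toSpanSingleton ℂ (1 : Y →L[ℝ] Y)).restrictScalars ℝ)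

lemma Lop_apply (A : Y →L[ℝ] Y) (n : ℕ) (c : ℂ) : Lop A n c = A ^ n * sm c := rfl

noncomputable def Rop (A : Y →L[ℝ] Y) (n : ℕ) : ℂ →L[ℝ] (Y →L[ℝ] Y) :=
  ((ContinuousLinearMap.compL ℝ Y Y Y).flip (A ^ n)).comp
    ((ContinuousLinearMap.toSpanSingleton ℂ (1 : Y →L[ℝ] Y)).restrictScalars ℝ)

lemma Rop_apply (A : Y →L[ℝ] Y) (n : ℕ) (c : ℂ) : Rop A n c = sm c * A ^ n := rfl

variable (A : Y →L[ℝ] Y)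

lemma zpow_cancel {z : ℂ} (hz0 : z ≠ 0) (n : ℕ) (c : ℂ) :
    z⁻¹ ^ (n + 1) * (z * c) = z⁻¹ ^ n * c := by
  field_simp [pow_succ]
  rw [one_div, pow_succ, mul_comm (z⁻¹ ^ n) z⁻¹, ← mul_assoc, mul_inv_cancel₀ hz0, one_mul, mul_comm]

lemma left_expand {z : ℂ} (hz : ‖A‖ < ‖z‖) (c : ℂ) :
    Tl A z * sm (z * c) = ∑' n, Lop A n (z⁻¹ ^ n * c) := by
  have hz0 : z ≠ 0 := by
    intro h; rw [h] at hz; simp at hz; exact absurd hz (not_lt.mpr (norm_nonneg A))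
  have h := (summable_lterm A hz).hasSum.mapL
    ((ContinuousLinearMap.compL ℝ Y Y Y).flip (sm (z * c)))
  have h2 : HasSum (fun n => lterm A z n * sm (z * c)) (Tl A z * sm (z * c)) := h
  rw [← h2.tsum_eq]
  apply tsum_congr
  intro n
  rw [lterm, mul_assoc, sm_mul_sm, zpow_cancel hz0, Lop_apply]

lemma right_expand {z : ℂ} (hz : ‖A‖ < ‖z‖) (c : ℂ) :
    sm (c * z) * Tr A z = ∑' n, Rop A n (z⁻¹ ^ n * c) := by
  have hz0 : z ≠ 0 := by
    intro h; rw [h] at hz; simp at hz; exact absurd hz (not_lt.mpr (norm_nonneg A))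
  have h := (summable_rterm A hz).hasSum.mapL
    (ContinuousLinearMap.compL ℝ Y Y Y (sm (c * z)))
  have h2 : HasSum (fun n => sm (c * z) * rterm A z n) (sm (c * z) * Tr A z) := h
  rw [← h2.tsum_eq]
  apply tsum_congr
  intro n
  rw [rterm, ← mul_assoc, sm_mul_sm, Rop_apply]
  congr 2
  field_simp [pow_succ]
  rw [one_div, pow_succ, mul_comm (z⁻¹ ^ n) z⁻¹, mul_assoc c, ← mul_assoc z, mul_inv_cancel₀ hz0, one_mul]

lemma norm_Lop_apply_le (n : ℕ) (c : ℂ) : ‖Lop A n c‖ ≤ ‖A‖ ^ n * ‖c‖ := by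
  rw [Lop_apply]
  calc ‖A ^ n * (sm c : Y →L[ℝ] Y)‖ ≤ ‖A ^ n‖ * ‖(sm c : Y →L[ℝ] Y)‖ := norm_mul_le _ _
    _ ≤ ‖A‖ ^ n * ‖c‖ :=
      mul_le_mul (norm_pow_le'' A n) (norm_sm_le c) (norm_nonneg _) (by positivity)

lemma norm_Rop_apply_le (n : ℕ) (c : ℂ) : ‖Rop A n c‖ ≤ ‖A‖ ^ n * ‖c‖ := by
  rw [Rop_apply]
  calc ‖(sm c : Y →L[ℝ] Y) * A ^ n‖ ≤ ‖(sm c : Y →L[ℝ] Y)‖ * ‖A ^ n‖ := norm_mul_le _ _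
    _ ≤ ‖c‖ * ‖A‖ ^ n :=
      mul_le_mul (norm_sm_le c) (norm_pow_le'' A n) (norm_nonneg _) (by positivity)
    _ = ‖A‖ ^ n * ‖c‖ := by ring

lemma Lop_real (n : ℕ) (t : ℝ) : Lop A n ((t : ℝ) : ℂ) = t • A ^ n := by
  rw [Lop_apply, sm_real, mul_rsmul, mul_one]

lemma Rop_real (n : ℕ) (t : ℝ) : Rop A n ((t : ℝ) : ℂ) = t • A ^ n := by
  rw [Rop_apply, sm_real, rsmul_mul, one_mul]

end Stmt19

namespace Stmt19
variable {Y : Type*} [NormedAddCommGroup Y] [NormedSpace ℂ Y] [CompleteSpace Y]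
variable (A : Y →L[ℝ] Y)

lemma op_integral {r : ℝ} (hr : ‖A‖ < r) {a : ℕ → ℝ}
    (hconv : Summable (fun n : ℕ => |a n| * r ^ n))
    {s : ℝ → ℂ} (hs : ∀ θ, s θ = r * Complex.exp (θ * Complex.I))
    (X : ℕ → ℂ →L[ℝ] (Y →L[ℝ] Y)) (hX : ∀ n c, ‖X n c‖ ≤ ‖A‖ ^ n * ‖c‖) :
    ∫ θ in (0:ℝ)..(2*π), (∑' n, X n ((s θ)⁻¹ ^ n * Fc a s θ))
      = ∑' n, X n (((2*π*(a n) : ℝ) : ℂ)) := by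
  have hr0 : (0:ℝ) < r := lt_of_le_of_lt (norm_nonneg A) hr
  have h2pi : (0:ℝ) ≤ 2*π := by positivity
  set M : ℝ := ∑' m, |a m| * r ^ m with hM
  have hM0 : 0 ≤ M := tsum_nonneg (fun m => by positivity)
  set q : ℝ := ‖A‖ * r⁻¹ with hq
  have hq0 : 0 ≤ q := by positivity
  have hq1 : q < 1 := by
    rw [hq, ← div_eq_mul_inv, div_lt_one hr0]; exact hr
  set hfun : ℕ → ℝ → (Y →L[ℝ] Y) := fun n θ => X n ((s θ)⁻¹ ^ n * Fc a s θ) with hhfun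
  have hcont : ∀ n, Continuous (hfun n) := by
    intro n
    exact (X n).continuous.comp
      ((((hs_cont hr0 hs).inv₀ (hs_ne hr0 hs)).pow n).mul (Fc_cont hr0 hconv hs))
  have hbnd : ∀ n θ, ‖hfun n θ‖ ≤ 2⁻¹ * π⁻¹ * ((2*π) * (q ^ n * M)) := by
    intro n θ
    have h1 : ‖(s θ)⁻¹ ^ n * Fc a s θ‖ ≤ r⁻¹ ^ n * M := by
      rw [norm_mul, norm_pow, norm_inv, habs hr0 hs]
      exact mul_le_mul_of_nonneg_left (Fc_bound hr0 hconv hs θ) (by positivity)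
    calc ‖hfun n θ‖ ≤ ‖A‖ ^ n * ‖(s θ)⁻¹ ^ n * Fc a s θ‖ := hX n _
      _ ≤ ‖A‖ ^ n * (r⁻¹ ^ n * M) := mul_le_mul_of_nonneg_left h1 (by positivity)
      _ = 2⁻¹ * π⁻¹ * ((2*π) * (q ^ n * M)) := by
          rw [hq, mul_pow]
          have hpi : π ≠ 0 := Real.pi_ne_zero
          field_simp
  have hIoc : ∀ n, IntegrableOn (hfun n) (Set.Ioc (0:ℝ) (2*π)) volume :=
    fun n => (hcont n).integrableOn_Ioc
  have hintle : ∀ n, (∫ θ in Set.Ioc (0:ℝ) (2*π), ‖hfun n θ‖) ≤ (2*π) * (q ^ n * M) := by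
    intro n
    have hconst : IntegrableOn (fun _ : ℝ => 2⁻¹ * π⁻¹ * ((2*π) * (q ^ n * M)))
        (Set.Ioc (0:ℝ) (2*π)) volume :=
      MeasureTheory.integrableOn_const
        (by rw [Real.volume_Ioc]; exact ENNReal.ofReal_ne_top)
    have hle := MeasureTheory.integral_mono ((hcont n).norm.integrableOn_Ioc) hconst (hbnd n)
    calc (∫ θ in Set.Ioc (0:ℝ) (2*π), ‖hfun n θ‖)
        ≤ ∫ _ in Set.Ioc (0:ℝ) (2*π), (2⁻¹ * π⁻¹ * ((2*π) * (q ^ n * M))) := hle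
      _ = (2*π) * (q ^ n * M) := by
          rw [MeasureTheory.setIntegral_const, Real.volume_real_Ioc_of_le h2pi, sub_zero, smul_eq_mul]
          have hpi : π ≠ 0 := Real.pi_ne_zero
          field_simp
  have hsummable : Summable (fun n => ∫ θ in Set.Ioc (0:ℝ) (2*π), ‖hfun n θ‖) := by
    apply Summable.of_nonneg_of_le
      (fun n => MeasureTheory.integral_nonneg (fun θ => norm_nonneg _)) hintle
    apply Summable.congr (((summable_geometric_of_lt_one hq0 hq1).mul_left ((2*π) * M)))
    intro n; ring
  have hinterchange := MeasureTheory.integral_tsum_of_summable_integral_norm hIoc hsummable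
  have e1 : ∫ θ in (0:ℝ)..(2*π), (∑' n, hfun n θ)
      = ∫ θ in Set.Ioc (0:ℝ) (2*π), (∑' n, hfun n θ) := intervalIntegral.integral_of_le h2pi
  rw [e1, ← hinterchange]
  apply tsum_congr
  intro n
  rw [← intervalIntegral.integral_of_le h2pi]
  have hii : IntervalIntegrable (fun θ => (s θ)⁻¹ ^ n * Fc a s θ) volume 0 (2*π) :=
    ((((hs_cont hr0 hs).inv₀ (hs_ne hr0 hs)).pow n).mul (Fc_cont hr0 hconv hs)).intervalIntegrable _ _
  rw [(X n).intervalIntegral_comp_comm hii]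
  rw [key_scalar hr0 hconv hs n]

end Stmt19

namespace Stmt19
variable {Y : Type*} [NormedAddCommGroup Y] [NormedSpace ℂ Y] [CompleteSpace Y]

lemma smul_eq_sm_mul (c : ℂ) (B : Y →L[ℝ] Y) : c • B = (sm c) * B := (sm_mul c B).symm

lemma comp_eq_mul (B C : Y →L[ℝ] Y) : B ∘L C = B * C := rfl

end Stmt19

open Stmt19

/-- agreement of the left and right S-functional calculus for intrinsic
functions, ball case: for an intrinsic power series `f(s) = ∑ aₙ sⁿ` with real
coefficients converging on the closed ball of radius `r > ‖A‖`, the left Cauchy-type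
integral, the norm-convergent sum `∑ aₙ Aⁿ`, and the right Cauchy-type integral along the
circle `s(θ) = r e^{iθ}` all give the same bounded ℝ-linear operator. -/
theorem stmt_19 {Y : Type*} [NormedAddCommGroup Y] [NormedSpace ℂ Y] [CompleteSpace Y]
    (A : Y →L[ℝ] Y) (r : ℝ) (hr : ‖A‖ < r)
    (a : ℕ → ℝ) (hconv : Summable (fun n : ℕ => |a n| * r ^ n))
    (f : ℂ → ℂ) (hf : ∀ z : ℂ, ‖z‖ ≤ r → f z = ∑' n : ℕ, (a n : ℂ) * z ^ n)
    (s : ℝ → ℂ) (hs : ∀ θ, s θ = r * Complex.exp (θ * Complex.I))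
    (SL SR : ℂ → (Y →L[ℝ] Y))
    (hSL : ∀ z : ℂ, SL z
      = -(Ring.inverse (A ^ 2 - (2 * z.re) • A + (‖z‖ ^ 2) • (1 : Y →L[ℝ] Y))
          ∘L (A - starRingEnd ℂ z • (1 : Y →L[ℝ] Y))))
    (hSR : ∀ z : ℂ, SR z
      = -((A - starRingEnd ℂ z • (1 : Y →L[ℝ] Y))
          ∘L Ring.inverse (A ^ 2 - (2 * z.re) • A + (‖z‖ ^ 2) • (1 : Y →L[ℝ] Y)))) :
    Summable (fun n : ℕ => ‖a n • A ^ n‖) ∧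
    (1 / (2 * π)) •
        (∫ θ in (0:ℝ)..(2 * π), SL (s θ) ∘L ((s θ * f (s θ)) • (1 : Y →L[ℝ] Y)))
      = ∑' n : ℕ, a n • A ^ n ∧
    (∑' n : ℕ, a n • A ^ n)
      = (1 / (2 * π)) • ∫ θ in (0:ℝ)..(2 * π), (f (s θ) * s θ) • SR (s θ) := by
  have hr0 : (0:ℝ) < r := lt_of_le_of_lt (norm_nonneg A) hr
  -- summability of the power series in A
  have hnormle : ∀ n : ℕ, ‖a n • A ^ n‖ ≤ |a n| * r ^ n := by
    intro n
    have hns := norm_smul (α := ℝ) (a n) (A ^ n : Y →L[ℝ] Y)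
    rw [hns, Real.norm_eq_abs]
    apply mul_le_mul_of_nonneg_left _ (abs_nonneg _)
    calc ‖A ^ n‖ ≤ ‖A‖ ^ n := norm_pow_le'' A n
      _ ≤ r ^ n := pow_le_pow_left₀ (norm_nonneg A) hr.le n
  have hASnorm : Summable (fun n : ℕ => ‖a n • A ^ n‖) :=
    hconv.of_nonneg_of_le (fun n => norm_nonneg _) hnormle
  have hAS : Summable (fun n : ℕ => a n • A ^ n) := hASnorm.of_norm
  -- a.e. goodness
  have hZ0 : MeasureTheory.volume {x : ℝ | Real.sin x = 0} = 0 := by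
    have hsub : {x : ℝ | Real.sin x = 0} ⊆ Set.range (fun k : ℤ => (k:ℝ) * π) := by
      intro x hx
      obtain ⟨n, hn⟩ := Real.sin_eq_zero_iff.mp hx
      exact ⟨n, hn⟩
    exact MeasureTheory.measure_mono_null hsub ((Set.countable_range _).measure_zero _)
  have hae : ∀ᵐ θ ∂MeasureTheory.volume, Real.sin θ ≠ 0 :=
    (MeasureTheory.measure_eq_zero_iff_ae_notMem.mp hZ0).mono (fun x hx => hx)
  -- facts at good θ
  have hzabs : ∀ θ, ‖(s θ)‖ = r := habs hr0 hs
  have hzA : ∀ θ, ‖A‖ < ‖(s θ)‖ := fun θ => by rw [hzabs θ]; exact hr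
  have hima : ∀ θ, Real.sin θ ≠ 0 → (s θ).im ≠ 0 := by
    intro θ hθ
    rw [hs θ]
    simp only [Complex.mul_im, Complex.ofReal_re, Complex.ofReal_im,
      Complex.exp_ofReal_mul_I_im, Complex.exp_ofReal_mul_I_re, zero_mul, add_zero]
    exact mul_ne_zero hr0.ne' hθ
  have hfF : ∀ θ, f (s θ) = Fc a s θ := fun θ => hf (s θ) (le_of_eq (hzabs θ))
  -- left integrand a.e.
  have hLgood : ∀ θ, Real.sin θ ≠ 0 →
      SL (s θ) ∘L ((s θ * f (s θ)) • (1 : Y →L[ℝ] Y))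
        = ∑' n, Lop A n ((s θ)⁻¹ ^ n * Fc a s θ) := by
    intro θ hθ
    rw [hSL (s θ), hfF θ]
    have h1 : -(Ring.inverse (Qop A (s θ)) ∘L (A - starRingEnd ℂ (s θ) • (1 : Y →L[ℝ] Y)))
        = Tl A (s θ) := SL_eq A (hzA θ) (hima θ hθ)
    show (-(Ring.inverse (Qop A (s θ)) ∘L (A - starRingEnd ℂ (s θ) • (1 : Y →L[ℝ] Y))))
        ∘L ((s θ * Fc a s θ) • (1 : Y →L[ℝ] Y)) = _
    rw [h1, comp_eq_mul]
    have h2 : ((s θ * Fc a s θ) • (1 : Y →L[ℝ] Y)) = sm (s θ * Fc a s θ) := rfl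
    rw [h2]
    exact left_expand A (hzA θ) (Fc a s θ)
  have hRgood : ∀ θ, Real.sin θ ≠ 0 →
      (f (s θ) * s θ) • SR (s θ)
        = ∑' n, Rop A n ((s θ)⁻¹ ^ n * Fc a s θ) := by
    intro θ hθ
    rw [hSR (s θ), hfF θ, smul_eq_sm_mul]
    have h1 : -((A - starRingEnd ℂ (s θ) • (1 : Y →L[ℝ] Y)) ∘L Ring.inverse (Qop A (s θ)))
        = Tr A (s θ) := SR_eq A (hzA θ) (hima θ hθ)
    show sm (Fc a s θ * s θ) *
        (-((A - starRingEnd ℂ (s θ) • (1 : Y →L[ℝ] Y)) ∘L Ring.inverse (Qop A (s θ)))) = _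
    rw [h1]
    exact right_expand A (hzA θ) (Fc a s θ)
  -- replace integrands
  have hLint : (∫ θ in (0:ℝ)..(2 * π), SL (s θ) ∘L ((s θ * f (s θ)) • (1 : Y →L[ℝ] Y)))
      = ∫ θ in (0:ℝ)..(2 * π), (∑' n, Lop A n ((s θ)⁻¹ ^ n * Fc a s θ)) := by
    apply intervalIntegral.integral_congr_ae
    exact hae.mono (fun θ hθ _ => hLgood θ hθ)
  have hRint : (∫ θ in (0:ℝ)..(2 * π), (f (s θ) * s θ) • SR (s θ))
      = ∫ θ in (0:ℝ)..(2 * π), (∑' n, Rop A n ((s θ)⁻¹ ^ n * Fc a s θ)) := by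
    apply intervalIntegral.integral_congr_ae
    exact hae.mono (fun θ hθ _ => hRgood θ hθ)
  -- compute
  have hLfinal : (∫ θ in (0:ℝ)..(2 * π), (∑' n, Lop A n ((s θ)⁻¹ ^ n * Fc a s θ)))
      = (2 * π) • ∑' n : ℕ, a n • A ^ n := by
    rw [op_integral A hr hconv hs (Lop A) (norm_Lop_apply_le A)]
    have : ∀ n : ℕ, Lop A n (((2*π*(a n) : ℝ) : ℂ)) = (2*π) • (a n • A ^ n) := by
      intro n
      rw [Lop_real, mul_smul]
    rw [tsum_congr this]
    exact (hAS.hasSum.const_smul (2*π)).tsum_eq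
  have hRfinal : (∫ θ in (0:ℝ)..(2 * π), (∑' n, Rop A n ((s θ)⁻¹ ^ n * Fc a s θ)))
      = (2 * π) • ∑' n : ℕ, a n • A ^ n := by
    rw [op_integral A hr hconv hs (Rop A) (norm_Rop_apply_le A)]
    have : ∀ n : ℕ, Rop A n (((2*π*(a n) : ℝ) : ℂ)) = (2*π) • (a n • A ^ n) := by
      intro n
      rw [Rop_real, mul_smul]
    rw [tsum_congr this]
    exact (hAS.hasSum.const_smul (2*π)).tsum_eq
  have hcancel : ∀ X : Y →L[ℝ] Y, (1 / (2 * π)) • ((2 * π) • X) = X := by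
    intro X
    rw [smul_smul, one_div, inv_mul_cancel₀ (by positivity : (2*π) ≠ 0), one_smul]
  refine ⟨hASnorm, ?_, ?_⟩
  · rw [hLint, hLfinal, hcancel]
  · rw [hRint, hRfinal, hcancel]
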